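/- arXiv:1605.00081 — 2 statements merged into one kernel-verified Lean document; each statement's English description precedes it below -/
import Mathlib

section
/- Let ⊗ be a continuous t-norm on [0,1] whose only idempotent elements are 0 and 1. Then: (1) if ⊗ has no nilpotent elements, there is a strictly increasing bijection φ : [0,1] → [0,1] with φ(x⊗y) = φ(x)·φ(y) for all x, y ∈ [0,1] (⊗ is isomorphic to multiplication); (2) if ⊗ has a nilpotent element, then every x with 0 < x < 1 is nilpotent, and there is a strictly increasing bijection φ : [0,1] → [0,1] with φ(x⊗y) = max(0, φ(x)+φ(y)−1) for all x, y ∈ [0,1] (⊗ is isomorphic to the Łukasiewicz tensor). -/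
open unitInterval Set

/-- A continuous t-norm on the unit interval `[0,1]`. -/
structure ContinuousTNorm where
  mul : I → I → I
  comm : ∀ x y, mul x y = mul y x
  assoc : ∀ x y z, mul (mul x y) z = mul x (mul y z)
  mono : ∀ ⦃x₁ x₂ y₁ y₂ : I⦄, x₁ ≤ x₂ → y₁ ≤ y₂ → mul x₁ y₁ ≤ mul x₂ y₂
  continuous : Continuous fun p : I × I => mul p.1 p.2
  one_mul' : ∀ x, mul 1 x = x

/-- The `n`-fold `⊗`-power `xⁿ`. -/
def ContinuousTNorm.pow (T : ContinuousTNorm) (x : I) : ℕ → I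
  | 0 => 1
  | n + 1 => T.mul x (T.pow x n)

/-!
Let `root n` be the iterated `⊗`-square roots of `1/2`, so `root (n+1) ⊗ root (n+1) = root n`, and
let `clog a x` be the least `k` with `aᵏ ≤ x`. As `0` and `1` are the only idempotents, the powers
of any `a < 1` decrease strictly until they vanish; hence `clog a (x ⊗ y)` lies between
`clog a x + clog a y - 2` and `clog a x + clog a y` unless `x ⊗ y = 0`, and `clog (root n) x / 2ⁿ`
converges to an additive generator `gen`: continuous, strictly decreasing, `gen 1 = 0`, and
`gen (x ⊗ y) = gen x + gen y` whenever `x ⊗ y ≠ 0`. Without nilpotent elements `exp ∘ (-gen)`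
carries `⊗` to multiplication; with one, every root is nilpotent, `gen 0` is finite, and
`1 - gen / gen 0` carries `⊗` to the Łukasiewicz tensor.
-/

open Filter Topology

lemma le_of_forall_le_add_div_two_pow {a b c : ℝ} (h : ∀ n : ℕ, a ≤ b + c / 2 ^ n) : a ≤ b := by
  have hlim : Tendsto (fun n : ℕ => b + c / 2 ^ n) atTop (𝓝 (b + 0)) :=
    tendsto_const_nhds.add
      (tendsto_const_nhds.div_atTop (tendsto_pow_atTop_atTop_of_one_lt one_lt_two))
  exact ge_of_tendsto' (by simpa using hlim) h

lemma exists_one_div_two_pow_lt {ε : ℝ} (hε : 0 < ε) : ∃ n : ℕ, 1 / 2 ^ n < ε := by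
  obtain ⟨n, hn⟩ := exists_pow_lt_of_lt_one hε (by norm_num : (1 / 2 : ℝ) < 1)
  exact ⟨n, by rwa [one_div_pow] at hn⟩

namespace ContinuousTNorm

variable (T : ContinuousTNorm)

/-- For continuous t-norms this is equivalent to the Archimedean property. -/
def IsArchimedean : Prop := ∀ x : I, T.mul x x = x → x = 0 ∨ x = 1

protected lemma mul_one (x : I) : T.mul x 1 = x := by rw [T.comm]; exact T.one_mul' x

lemma mul_le_left (x y : I) : T.mul x y ≤ x := by
  simpa only [T.mul_one] using T.mono le_rfl (le_one' : y ≤ 1)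

lemma mul_le_right (x y : I) : T.mul x y ≤ y := T.comm y x ▸ T.mul_le_left y x

protected lemma zero_mul (x : I) : T.mul 0 x = 0 := le_antisymm (T.mul_le_left 0 x) nonneg'

protected lemma mul_zero (x : I) : T.mul x 0 = 0 := by rw [T.comm]; exact T.zero_mul x

lemma continuous_mul_comp {α : Type*} [TopologicalSpace α] {f g : α → I} (hf : Continuous f)
    (hg : Continuous g) : Continuous fun a => T.mul (f a) (g a) :=
  T.continuous.comp (hf.prodMk hg)

lemma tendsto_mul {α : Type*} {l : Filter α} {f g : α → I} {x y : I} (hf : Tendsto f l (𝓝 x))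
    (hg : Tendsto g l (𝓝 y)) : Tendsto (fun a => T.mul (f a) (g a)) l (𝓝 (T.mul x y)) :=
  (T.continuous.tendsto (x, y)).comp (hf.prodMk_nhds hg)

protected lemma left_ne_zero_of_mul {x y : I} (h : T.mul x y ≠ 0) : x ≠ 0 :=
  fun hx => h (by rw [hx, T.zero_mul])

protected lemma right_ne_zero_of_mul {x y : I} (h : T.mul x y ≠ 0) : y ≠ 0 :=
  fun hy => h (by rw [hy, T.mul_zero])

protected lemma pow_zero (x : I) : T.pow x 0 = 1 := rfl

protected lemma pow_succ (x : I) (n : ℕ) : T.pow x (n + 1) = T.mul x (T.pow x n) := rfl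

protected lemma pow_one (x : I) : T.pow x 1 = x := T.mul_one x

protected lemma pow_two (x : I) : T.pow x 2 = T.mul x x := by rw [T.pow_succ, T.pow_one]

protected lemma pow_add (x : I) (m n : ℕ) : T.pow x (m + n) = T.mul (T.pow x m) (T.pow x n) := by
  induction m with
  | zero => rw [Nat.zero_add, T.pow_zero, T.one_mul']
  | succ m ih => rw [Nat.succ_add, T.pow_succ, ih, T.pow_succ, T.assoc]

protected lemma pow_mul (x : I) (m n : ℕ) : T.pow x (m * n) = T.pow (T.pow x m) n := by
  induction n with
  | zero => rfl
  | succ n ih => rw [Nat.mul_succ, T.pow_add, ih, T.pow_succ, T.comm]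

lemma pow_le_pow_left {x y : I} (h : x ≤ y) (n : ℕ) : T.pow x n ≤ T.pow y n := by
  induction n with
  | zero => exact le_rfl
  | succ n ih => exact T.mono h ih

lemma pow_antitone (x : I) : Antitone (T.pow x) :=
  antitone_nat_of_succ_le fun n => T.mul_le_right x (T.pow x n)

protected lemma mul_ne_zero (hstrict : ∀ x : I, x ≠ 0 → ∀ n : ℕ, T.pow x n ≠ 0) {x y : I}
    (hx : x ≠ 0) (hy : y ≠ 0) : T.mul x y ≠ 0 := by
  have hmin : min x y ≠ 0 := by rcases min_choice x y with h | h <;> rw [h] <;> assumption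
  intro h
  refine hstrict _ hmin 2 (le_antisymm ?_ nonneg')
  rw [T.pow_two, ← h]
  exact T.mono (min_le_left x y) (min_le_right x y)

lemma exists_mul_eq {x y : I} (h : x ≤ y) : ∃ u, T.mul y u = x := by
  have hivt := intermediate_value_univ 0 1
    (T.continuous_mul_comp continuous_const continuous_id : Continuous fun u => T.mul y u)
  rw [T.mul_zero, T.mul_one] at hivt
  exact hivt ⟨nonneg', h⟩

lemma exists_mul_self_eq (x : I) : ∃ y, T.mul y y = x := by
  have hivt := intermediate_value_univ 0 1
    (T.continuous_mul_comp continuous_id continuous_id : Continuous fun u => T.mul u u)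
  rw [T.mul_zero, T.mul_one] at hivt
  exact hivt ⟨nonneg', le_one'⟩

lemma mul_self_eq_of_tendsto {α : Type*} {l : Filter α} [l.NeBot] {u : α → I} {z : I}
    (hu : Tendsto u l (𝓝 z)) (huu : Tendsto (fun a => T.mul (u a) (u a)) l (𝓝 z)) :
    T.mul z z = z :=
  tendsto_nhds_unique (T.tendsto_mul hu hu) huu

noncomputable def sqrt (x : I) : I := (T.exists_mul_self_eq x).choose

lemma sqrt_mul_self (x : I) : T.mul (T.sqrt x) (T.sqrt x) = x :=
  (T.exists_mul_self_eq x).choose_spec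

noncomputable def root : ℕ → I
  | 0 => ⟨1 / 2, by norm_num, by norm_num⟩
  | n + 1 => T.sqrt (root n)

lemma root_succ_mul_self (n : ℕ) : T.mul (T.root (n + 1)) (T.root (n + 1)) = T.root n :=
  T.sqrt_mul_self _

lemma root_pos (n : ℕ) : 0 < T.root n := by
  induction n with
  | zero => show (0 : ℝ) < 1 / 2; norm_num
  | succ n ih =>
    refine pos_iff_ne_zero.2 fun h => ih.ne' ?_
    rw [← T.root_succ_mul_self, h, T.zero_mul]

lemma root_lt_one (n : ℕ) : T.root n < 1 := by
  induction n with
  | zero => show (1 / 2 : ℝ) < 1; norm_num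
  | succ n ih =>
    refine lt_of_le_of_ne le_one' fun h => ih.ne ?_
    rw [← T.root_succ_mul_self, h, T.mul_one]

lemma pow_root_succ_two_mul (n k : ℕ) : T.pow (T.root (n + 1)) (2 * k) = T.pow (T.root n) k := by
  rw [T.pow_mul, T.pow_two, T.root_succ_mul_self]

lemma root_monotone : Monotone T.root :=
  monotone_nat_of_le_succ fun n => T.root_succ_mul_self n ▸ T.mul_le_left _ _

section Archimedean

variable {T}

lemma tendsto_pow_atTop_zero (hT : T.IsArchimedean) {x : I} (hx : x < 1) :
    Tendsto (T.pow x) atTop (𝓝 0) := by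
  have hlim := tendsto_atTop_iInf (T.pow_antitone x)
  have hsq : Tendsto (fun n => T.mul (T.pow x n) (T.pow x n)) atTop (𝓝 (⨅ n, T.pow x n)) := by
    simpa only [Function.comp_def, ← T.pow_add] using
      hlim.comp (tendsto_atTop_mono (fun n => Nat.le_add_left n n) tendsto_id)
  rcases hT _ (T.mul_self_eq_of_tendsto hlim hsq) with h | h
  · rwa [h] at hlim
  · exact absurd (h ▸ iInf_le _ 1) (by rw [T.pow_one]; exact hx.not_ge)

lemma eq_zero_of_mul_eq_self (hT : T.IsArchimedean) {b z : I} (hb : b < 1)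
    (h : T.mul b z = z) : z = 0 := by
  have hfix : ∀ n, T.mul (T.pow b n) z = z := by
    intro n
    induction n with
    | zero => exact T.one_mul' z
    | succ n ih => rw [T.pow_succ, T.assoc, ih, h]
  have hlim := T.tendsto_mul (T.tendsto_pow_atTop_zero hT hb) (tendsto_const_nhds (x := z))
  simp only [hfix, T.zero_mul] at hlim
  exact tendsto_nhds_unique tendsto_const_nhds hlim

lemma mul_lt_left (hT : T.IsArchimedean) {x a : I} (hx : x ≠ 0) (ha : a < 1) : T.mul x a < x :=
  (T.mul_le_left x a).lt_of_ne fun h => hx (T.eq_zero_of_mul_eq_self hT ha (by rwa [T.comm]))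

lemma eq_zero_of_pow_le_of_le_pow_succ (hT : T.IsArchimedean) {a z : I} (ha : a < 1) {m : ℕ}
    (h₁ : T.pow a m ≤ z) (h₂ : z ≤ T.pow a (m + 1)) : z = 0 := by
  have hfix : T.mul a (T.pow a m) = T.pow a m := le_antisymm (T.mul_le_right _ _) (h₁.trans h₂)
  have h0 := T.eq_zero_of_mul_eq_self hT ha hfix
  exact le_antisymm (h₂.trans ((T.mul_le_right _ _).trans h0.le)) nonneg'

lemma exists_pow_le (hT : T.IsArchimedean) {a x : I} (ha : a < 1) (hx : x ≠ 0) :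
    ∃ k, T.pow a k ≤ x :=
  ((T.tendsto_pow_atTop_zero hT ha).eventually (ge_mem_nhds (pos_iff_ne_zero.2 hx))).exists

lemma exists_pow_eq_zero_of_lt_one (hT : T.IsArchimedean)
    (hnil : ∃ x : I, x ≠ 0 ∧ ∃ n : ℕ, T.pow x n = 0) {x : I} (hx : x < 1) :
    ∃ n : ℕ, T.pow x n = 0 := by
  obtain ⟨x₀, hx₀, N, hN⟩ := hnil
  obtain ⟨n, hn⟩ := T.exists_pow_le hT hx hx₀
  refine ⟨n * N, le_antisymm ?_ nonneg'⟩
  rw [T.pow_mul, ← hN]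
  exact T.pow_le_pow_left hn N

lemma tendsto_root_one (hT : T.IsArchimedean) :
    Tendsto T.root atTop (𝓝 1) := by
  have hlim := tendsto_atTop_iSup T.root_monotone
  have hsq : Tendsto (fun n => T.mul (T.root (n + 1)) (T.root (n + 1))) atTop
      (𝓝 (⨆ n, T.root n)) := by
    simpa only [T.root_succ_mul_self] using hlim
  rcases hT _ (T.mul_self_eq_of_tendsto (hlim.comp (tendsto_add_atTop_nat 1)) hsq) with h | h
  · exact absurd (h ▸ le_iSup T.root 0) (T.root_pos 0).not_ge
  · rwa [h] at hlim

end Archimedean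

/-- This is `sInf ∅ = 0` when no power of `a` lies below `x`. -/
noncomputable def clog (a x : I) : ℕ := sInf {k | T.pow a k ≤ x}

section Clog

variable {T} {a x y : I}

lemma pow_clog_le (h : ∃ k, T.pow a k ≤ x) : T.pow a (T.clog a x) ≤ x := Nat.sInf_mem h

lemma clog_le {k : ℕ} (h : T.pow a k ≤ x) : T.clog a x ≤ k := Nat.sInf_le h

lemma lt_pow_of_lt_clog {k : ℕ} (h : k < T.clog a x) : x < T.pow a k :=
  not_le.1 (Nat.notMem_of_lt_sInf h)

lemma le_pow_pred_clog : x ≤ T.pow a (T.clog a x - 1) := by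
  rcases Nat.eq_zero_or_pos (T.clog a x) with h | h
  · rw [h]
    exact le_one'
  · exact (lt_pow_of_lt_clog (Nat.sub_lt h one_pos)).le

lemma clog_pos (h : ∃ k, T.pow a k ≤ x) (hx : x < 1) : 0 < T.clog a x := by
  refine Nat.pos_of_ne_zero fun h0 => hx.not_ge ?_
  simpa only [h0, T.pow_zero] using pow_clog_le h

lemma two_le_clog (h : ∃ k, T.pow a k ≤ x) (hx : x < a) : 2 ≤ T.clog a x := by
  by_contra! hlt
  refine hx.not_ge (le_trans ?_ (pow_clog_le h))
  simpa only [T.pow_one] using T.pow_antitone a (Nat.lt_succ_iff.1 hlt)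

lemma clog_anti (h : ∃ k, T.pow a k ≤ x) (hxy : x ≤ y) : T.clog a y ≤ T.clog a x :=
  clog_le ((pow_clog_le h).trans hxy)

lemma clog_one : T.clog a 1 = 0 := Nat.le_zero.1 (clog_le le_one')

lemma clog_self_le : T.clog a a ≤ 1 := clog_le (T.pow_one a).le

lemma exists_pow_le_mul (hx : ∃ k, T.pow a k ≤ x) (hy : ∃ k, T.pow a k ≤ y) :
    ∃ k, T.pow a k ≤ T.mul x y := by
  obtain ⟨k, hk⟩ := hx
  obtain ⟨l, hl⟩ := hy
  exact ⟨k + l, T.pow_add a k l ▸ T.mono hk hl⟩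

lemma clog_mul_le (hx : ∃ k, T.pow a k ≤ x) (hy : ∃ k, T.pow a k ≤ y) :
    T.clog a (T.mul x y) ≤ T.clog a x + T.clog a y :=
  clog_le (T.pow_add a _ _ ▸ T.mono (pow_clog_le hx) (pow_clog_le hy))

lemma clog_add_clog_le (hT : T.IsArchimedean) (ha : a < 1) (hx : ∃ k, T.pow a k ≤ x)
    (hy : ∃ k, T.pow a k ≤ y) (hxy : T.mul x y ≠ 0) :
    T.clog a x + T.clog a y ≤ T.clog a (T.mul x y) + 2 := by
  by_contra! hlt
  have hup : T.mul x y ≤ T.pow a (T.clog a (T.mul x y) + 1) := calc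
    T.mul x y ≤ T.mul (T.pow a (T.clog a x - 1)) (T.pow a (T.clog a y - 1)) :=
      T.mono le_pow_pred_clog le_pow_pred_clog
    _ = T.pow a (T.clog a x - 1 + (T.clog a y - 1)) := (T.pow_add _ _ _).symm
    _ ≤ _ := T.pow_antitone a (by omega)
  exact hxy (T.eq_zero_of_pow_le_of_le_pow_succ hT ha (pow_clog_le (exists_pow_le_mul hx hy)) hup)

lemma clog_root_succ_le {n : ℕ} (h : ∃ k, T.pow (T.root n) k ≤ x) :
    T.clog (T.root (n + 1)) x ≤ 2 * T.clog (T.root n) x :=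
  clog_le (by rw [T.pow_root_succ_two_mul]; exact pow_clog_le h)

lemma two_mul_clog_root_le {n : ℕ} (h : ∃ k, T.pow (T.root (n + 1)) k ≤ x) :
    2 * T.clog (T.root n) x ≤ T.clog (T.root (n + 1)) x + 1 := by
  by_contra! hlt
  have hle : T.pow (T.root (n + 1)) (2 * (T.clog (T.root n) x - 1)) ≤ x :=
    (T.pow_antitone _ (by omega)).trans (pow_clog_le h)
  rw [T.pow_root_succ_two_mul] at hle
  exact (lt_pow_of_lt_clog (by omega)).not_ge hle

end Clog

/-- All nonzero points, and `0` as well when the roots are nilpotent: where every `clog (root n)`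
is honest, so that `gen` below is the additive generator. -/
def genDomain : Set I := {x | ∀ n, ∃ k, T.pow (T.root n) k ≤ x}

noncomputable def approx (n : ℕ) (x : I) : ℝ := T.clog (T.root n) x / 2 ^ n

noncomputable def gen (x : I) : ℝ := ⨅ n, T.approx n x

section Generator

variable {T} {x y : I}

lemma mem_genDomain_of_ne_zero (hT : T.IsArchimedean) (hx : x ≠ 0) : x ∈ T.genDomain :=
  fun n => T.exists_pow_le hT (T.root_lt_one n) hx

lemma root_mem_genDomain (hT : T.IsArchimedean) (n : ℕ) : T.root n ∈ T.genDomain :=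
  mem_genDomain_of_ne_zero hT (T.root_pos n).ne'

lemma isUpperSet_genDomain : IsUpperSet T.genDomain :=
  fun _ _ hxy hx n => (hx n).imp fun _ hk => hk.trans hxy

lemma mul_mem_genDomain (hx : x ∈ T.genDomain) (hy : y ∈ T.genDomain) :
    T.mul x y ∈ T.genDomain :=
  fun n => exists_pow_le_mul (hx n) (hy n)

lemma zero_mem_genDomain (hT : T.IsArchimedean)
    (hnil : ∃ x : I, x ≠ 0 ∧ ∃ n : ℕ, T.pow x n = 0) : (0 : I) ∈ T.genDomain :=
  fun n => (T.exists_pow_eq_zero_of_lt_one hT hnil (T.root_lt_one n)).imp fun _ hk => hk.le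

lemma approx_nonneg (n : ℕ) (x : I) : 0 ≤ T.approx n x := by unfold approx; positivity

lemma approx_succ_le (hx : x ∈ T.genDomain) (n : ℕ) : T.approx (n + 1) x ≤ T.approx n x := by
  have h : (T.clog (T.root (n + 1)) x : ℝ) ≤ 2 * T.clog (T.root n) x := by
    exact_mod_cast clog_root_succ_le (hx n)
  unfold approx
  calc (T.clog (T.root (n + 1)) x : ℝ) / 2 ^ (n + 1) ≤ 2 * T.clog (T.root n) x / 2 ^ (n + 1) := by
        gcongr
    _ = T.clog (T.root n) x / 2 ^ n := by rw [pow_succ]; field_simp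

lemma approx_sub_le_succ (hx : x ∈ T.genDomain) (n : ℕ) :
    T.approx n x - 1 / 2 ^ n ≤ T.approx (n + 1) x - 1 / 2 ^ (n + 1) := by
  have h : 2 * (T.clog (T.root n) x : ℝ) ≤ T.clog (T.root (n + 1)) x + 1 := by
    exact_mod_cast two_mul_clog_root_le (hx (n + 1))
  unfold approx
  calc (T.clog (T.root n) x : ℝ) / 2 ^ n - 1 / 2 ^ n
        = (2 * T.clog (T.root n) x - 2) / 2 ^ (n + 1) := by rw [pow_succ]; field_simp
    _ ≤ (T.clog (T.root (n + 1)) x + 1 - 2) / 2 ^ (n + 1) := by gcongr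
    _ = _ := by ring

lemma gen_le_approx (n : ℕ) (x : I) : T.gen x ≤ T.approx n x :=
  ciInf_le ⟨0, by rintro _ ⟨m, rfl⟩; exact T.approx_nonneg m x⟩ n

lemma approx_le_gen_add (hx : x ∈ T.genDomain) (n : ℕ) : T.approx n x ≤ T.gen x + 1 / 2 ^ n := by
  have key : ∀ m, T.approx n x - 1 / 2 ^ n ≤ T.approx m x := fun m => calc
    _ ≤ T.approx (max n m) x - 1 / 2 ^ max n m :=
      monotone_nat_of_le_succ (f := fun k => T.approx k x - 1 / 2 ^ k) (approx_sub_le_succ hx)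
        (le_max_left n m)
    _ ≤ T.approx (max n m) x := sub_le_self _ (by positivity)
    _ ≤ T.approx m x :=
      antitone_nat_of_succ_le (f := fun k => T.approx k x) (approx_succ_le hx) (le_max_right n m)
  have : T.approx n x - 1 / 2 ^ n ≤ T.gen x := le_ciInf key
  linarith

lemma gen_nonneg (x : I) : 0 ≤ T.gen x := le_ciInf fun n => T.approx_nonneg n x

lemma gen_one : T.gen 1 = 0 := by simp [gen, approx, clog_one]

lemma gen_root_le (n : ℕ) : T.gen (T.root n) ≤ 1 / 2 ^ n := by
  refine (T.gen_le_approx n _).trans ?_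
  unfold approx
  gcongr
  exact_mod_cast clog_self_le

lemma gen_anti (hx : x ∈ T.genDomain) (hxy : x ≤ y) : T.gen y ≤ T.gen x := by
  refine le_ciInf fun n => (T.gen_le_approx n y).trans ?_
  unfold approx
  gcongr
  exact clog_anti (hx n) hxy

lemma gen_mul_le (hx : x ∈ T.genDomain) (hy : y ∈ T.genDomain) :
    T.gen (T.mul x y) ≤ T.gen x + T.gen y := by
  refine le_of_forall_le_add_div_two_pow (c := 2) fun n => ?_
  have hc : (T.clog (T.root n) (T.mul x y) : ℝ) ≤ T.clog (T.root n) x + T.clog (T.root n) y := by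
    exact_mod_cast clog_mul_le (hx n) (hy n)
  calc T.gen (T.mul x y) ≤ T.approx n (T.mul x y) := T.gen_le_approx n _
    _ ≤ T.approx n x + T.approx n y := by unfold approx; rw [← add_div]; gcongr
    _ ≤ T.gen x + 1 / 2 ^ n + (T.gen y + 1 / 2 ^ n) :=
      add_le_add (approx_le_gen_add hx n) (approx_le_gen_add hy n)
    _ = T.gen x + T.gen y + 2 / 2 ^ n := by ring

lemma add_le_gen_mul (hT : T.IsArchimedean) (hxy : T.mul x y ≠ 0) :
    T.gen x + T.gen y ≤ T.gen (T.mul x y) := by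
  have hx := mem_genDomain_of_ne_zero hT (T.left_ne_zero_of_mul hxy)
  have hy := mem_genDomain_of_ne_zero hT (T.right_ne_zero_of_mul hxy)
  refine le_of_forall_le_add_div_two_pow (c := 3) fun n => ?_
  have hc : (T.clog (T.root n) x : ℝ) + T.clog (T.root n) y ≤
      T.clog (T.root n) (T.mul x y) + 2 := by
    exact_mod_cast clog_add_clog_le hT (T.root_lt_one n) (hx n) (hy n) hxy
  calc T.gen x + T.gen y ≤ T.approx n x + T.approx n y :=
      add_le_add (T.gen_le_approx n x) (T.gen_le_approx n y)
    _ ≤ T.approx n (T.mul x y) + 2 / 2 ^ n := by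
      unfold approx; rw [← add_div, ← add_div]; gcongr
    _ ≤ T.gen (T.mul x y) + 1 / 2 ^ n + 2 / 2 ^ n := by
      linarith [approx_le_gen_add (mul_mem_genDomain hx hy) n]
    _ = T.gen (T.mul x y) + 3 / 2 ^ n := by ring

lemma gen_mul_of_ne_zero (hT : T.IsArchimedean) (hxy : T.mul x y ≠ 0) :
    T.gen (T.mul x y) = T.gen x + T.gen y :=
  (gen_mul_le (mem_genDomain_of_ne_zero hT (T.left_ne_zero_of_mul hxy))
    (mem_genDomain_of_ne_zero hT (T.right_ne_zero_of_mul hxy))).antisymm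
    (add_le_gen_mul hT hxy)

lemma gen_mul_eq_min (hT : T.IsArchimedean) (h0 : (0 : I) ∈ T.genDomain) (x y : I) :
    T.gen (T.mul x y) = min (T.gen 0) (T.gen x + T.gen y) := by
  have hdom : ∀ z, z ∈ T.genDomain := fun z => isUpperSet_genDomain nonneg' h0
  rcases eq_or_ne (T.mul x y) 0 with h | h
  · rw [h, min_eq_left (h ▸ gen_mul_le (hdom x) (hdom y))]
  · rw [gen_mul_of_ne_zero hT h, min_eq_right (gen_mul_of_ne_zero hT h ▸ gen_anti h0 nonneg')]

lemma gen_pos (hT : T.IsArchimedean) (hx : x ∈ T.genDomain) (hx1 : x < 1) : 0 < T.gen x := by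
  obtain ⟨n, hn⟩ := ((tendsto_root_one hT).eventually (lt_mem_nhds hx1)).exists
  have h2 : (2 : ℝ) / 2 ^ n ≤ T.approx n x := by
    unfold approx
    gcongr
    exact_mod_cast two_le_clog (hx n) hn
  calc 0 < (1 : ℝ) / 2 ^ n := by positivity
    _ = 2 / 2 ^ n - 1 / 2 ^ n := by ring
    _ ≤ T.approx n x - 1 / 2 ^ n := by gcongr
    _ ≤ T.gen x := by linarith [approx_le_gen_add hx n]

lemma gen_lt_gen (hT : T.IsArchimedean) (hx : x ∈ T.genDomain) (hxy : x < y) :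
    T.gen y < T.gen x := by
  obtain ⟨w, hxw, hwy⟩ := exists_between hxy
  obtain ⟨u, rfl⟩ := T.exists_mul_eq hwy.le
  have hyu : T.mul y u ≠ 0 := (hxw.trans_le' nonneg').ne'
  have hu1 : u < 1 := lt_of_le_of_ne le_one' fun h => hwy.ne (by rw [h, T.mul_one])
  have hu := mem_genDomain_of_ne_zero hT (T.right_ne_zero_of_mul hyu)
  calc T.gen y < T.gen y + T.gen u := lt_add_of_pos_right _ (gen_pos hT hu hu1)
    _ = T.gen (T.mul y u) := (gen_mul_of_ne_zero hT hyu).symm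
    _ ≤ T.gen x := gen_anti hx hxw.le

lemma gen_pow (hT : T.IsArchimedean) {c : I} {m : ℕ} (h : T.pow c m ≠ 0) :
    T.gen (T.pow c m) = m * T.gen c := by
  induction m with
  | zero => simp [T.pow_zero, gen_one]
  | succ m ih =>
    rw [T.pow_succ] at h ⊢
    rw [gen_mul_of_ne_zero hT h, ih (T.right_ne_zero_of_mul h)]
    push_cast
    ring

lemma continuousWithinAt_gen (hT : T.IsArchimedean) (hx : x ∈ T.genDomain) :
    ContinuousWithinAt T.gen T.genDomain x := by
  refine tendsto_order.2 ⟨fun b hb => ?_, fun b hb => ?_⟩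
  · rcases (le_one' : x ≤ 1).eq_or_lt with rfl | hx1
    · exact Eventually.of_forall fun y => hb.trans_le (gen_one (T := T) ▸ T.gen_nonneg y)
    obtain ⟨n, hn⟩ := exists_one_div_two_pow_lt (sub_pos.2 hb)
    set a := T.root n
    set z := T.pow a (T.clog a x - 1)
    have hc : 0 < T.clog a x := clog_pos (hx n) hx1
    have hxz : x < z := lt_pow_of_lt_clog (Nat.sub_lt hc one_pos)
    have haz : T.mul a z ≤ x := by
      rw [← T.pow_succ, Nat.sub_add_cancel hc]
      exact pow_clog_le (hx n)
    have hz : z ∈ T.genDomain := isUpperSet_genDomain hxz.le hx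
    have hgz : T.gen x ≤ T.gen a + T.gen z :=
      (gen_anti (mul_mem_genDomain (root_mem_genDomain hT n) hz) haz).trans
        (gen_mul_le (root_mem_genDomain hT n) hz)
    filter_upwards [self_mem_nhdsWithin, nhdsWithin_le_nhds (Iio_mem_nhds hxz)] with y hy hyz
    linarith [gen_anti hy hyz.le, T.gen_root_le n]
  · rcases eq_or_ne x 0 with rfl | hx0
    · exact eventually_nhdsWithin_of_forall fun y _ => (gen_anti hx nonneg').trans_lt hb
    obtain ⟨n, hn⟩ := exists_one_div_two_pow_lt (sub_pos.2 hb)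
    have hlo : T.mul x (T.root n) ∈ T.genDomain := mul_mem_genDomain hx (root_mem_genDomain hT n)
    have hglo : T.gen (T.mul x (T.root n)) < b := by
      linarith [gen_mul_le hx (root_mem_genDomain hT n), T.gen_root_le n]
    filter_upwards [nhdsWithin_le_nhds (Ioi_mem_nhds (mul_lt_left hT hx0 (T.root_lt_one n)))]
      with y hy
    exact (gen_anti hlo hy.le).trans_lt hglo

lemma surjOn_gen (hT : T.IsArchimedean) (hx : x ∈ T.genDomain) :
    SurjOn T.gen (Icc x 1) (Icc 0 (T.gen x)) := by
  have hcont : ContinuousOn T.gen (Icc x 1) := fun z hz =>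
    (continuousWithinAt_gen hT (isUpperSet_genDomain hz.1 hx)).mono
      fun w hw => isUpperSet_genDomain hw.1 hx
  intro t ht
  exact intermediate_value_Icc' le_one' hcont (by rwa [gen_one])

lemma exists_ne_zero_gen_eq (hT : T.IsArchimedean)
    (hstrict : ∀ x : I, x ≠ 0 → ∀ n : ℕ, T.pow x n ≠ 0) {t : ℝ} (ht : 0 ≤ t) :
    ∃ u, u ≠ 0 ∧ T.gen u = t := by
  set c := T.root 0
  have hc : 0 < T.gen c := gen_pos hT (root_mem_genDomain hT 0) (T.root_lt_one 0)
  have hm : T.pow c ⌈t / T.gen c⌉₊ ≠ 0 := hstrict c (T.root_pos 0).ne' _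
  have htm : t ≤ T.gen (T.pow c ⌈t / T.gen c⌉₊) := by
    rw [gen_pow hT hm, ← div_le_iff₀ hc]
    exact Nat.le_ceil _
  obtain ⟨u, hu, rfl⟩ := surjOn_gen hT (mem_genDomain_of_ne_zero hT hm) ⟨ht, htm⟩
  exact ⟨u, fun h0 => hm (le_antisymm (h0 ▸ hu.1) nonneg'), rfl⟩

end Generator

variable {T}

theorem exists_strictMono_map_mul_eq_mul (hT : T.IsArchimedean)
    (hstrict : ∀ x : I, x ≠ 0 → ∀ n : ℕ, T.pow x n ≠ 0) :
    ∃ φ : I → I, StrictMono φ ∧ Function.Bijective φ ∧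
      ∀ x y : I, (φ (T.mul x y) : ℝ) = (φ x : ℝ) * (φ y : ℝ) := by
  have hmem : ∀ x, Real.exp (-T.gen x) ∈ I := fun x =>
    ⟨(Real.exp_pos _).le, Real.exp_le_one_iff.2 (neg_nonpos.2 (T.gen_nonneg x))⟩
  let φ : I → I := fun x => if x = 0 then 0 else ⟨_, hmem x⟩
  have hφ0 : φ 0 = 0 := if_pos rfl
  have hφ : ∀ x, x ≠ 0 → (φ x : ℝ) = Real.exp (-T.gen x) := fun x hx => by simp [φ, hx]
  have hmono : StrictMono φ := by
    intro x y hxy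
    have hy : y ≠ 0 := (hxy.trans_le' nonneg').ne'
    rw [← Subtype.coe_lt_coe, hφ y hy]
    rcases eq_or_ne x 0 with rfl | hx
    · rw [hφ0]
      exact Real.exp_pos _
    · rw [hφ x hx, Real.exp_lt_exp, neg_lt_neg_iff]
      exact gen_lt_gen hT (mem_genDomain_of_ne_zero hT hx) hxy
  refine ⟨φ, hmono, ⟨hmono.injective, fun v => ?_⟩, fun x y => ?_⟩
  · rcases eq_or_ne v 0 with rfl | hv
    · exact ⟨0, hφ0⟩
    have hv0 : (0 : ℝ) < v := unitInterval.pos_iff_ne_zero.2 hv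
    obtain ⟨u, hu, hgen⟩ := exists_ne_zero_gen_eq hT hstrict
      (neg_nonneg.2 (Real.log_nonpos hv0.le v.2.2))
    exact ⟨u, Subtype.ext (by rw [hφ u hu, hgen, neg_neg, Real.exp_log hv0])⟩
  · rcases eq_or_ne x 0 with rfl | hx
    · simp [T.zero_mul, hφ0]
    rcases eq_or_ne y 0 with rfl | hy
    · simp [T.mul_zero, hφ0]
    have hxy := T.mul_ne_zero hstrict hx hy
    rw [hφ _ hxy, hφ x hx, hφ y hy, gen_mul_of_ne_zero hT hxy, neg_add, Real.exp_add]

theorem exists_strictMono_map_mul_eq_lukasiewicz (hT : T.IsArchimedean)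
    (hnil : ∃ x : I, x ≠ 0 ∧ ∃ n : ℕ, T.pow x n = 0) :
    ∃ φ : I → I, StrictMono φ ∧ Function.Bijective φ ∧
      ∀ x y : I, (φ (T.mul x y) : ℝ) = max 0 ((φ x : ℝ) + (φ y : ℝ) - 1) := by
  have h0 := zero_mem_genDomain hT hnil
  have hdom : ∀ x, x ∈ T.genDomain := fun x => isUpperSet_genDomain nonneg' h0
  have hL : 0 < T.gen 0 := gen_pos hT h0 zero_lt_one
  have hmem : ∀ x, 1 - T.gen x / T.gen 0 ∈ I := fun x =>
    ⟨sub_nonneg.2 ((div_le_one hL).2 (gen_anti h0 nonneg')),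
      sub_le_self _ (div_nonneg (T.gen_nonneg x) hL.le)⟩
  let φ : I → I := fun x => ⟨_, hmem x⟩
  have hmono : StrictMono φ := fun x y hxy =>
    sub_lt_sub_left (div_lt_div_of_pos_right (gen_lt_gen hT (hdom x) hxy) hL) 1
  refine ⟨φ, hmono, ⟨hmono.injective, fun v => ?_⟩, fun x y => ?_⟩
  · obtain ⟨u, -, hu⟩ := surjOn_gen hT h0
      ⟨mul_nonneg (sub_nonneg.2 v.2.2) hL.le, mul_le_of_le_one_left hL.le (by linarith [v.2.1])⟩
    refine ⟨u, Subtype.ext ?_⟩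
    change 1 - T.gen u / T.gen 0 = v
    rw [hu, mul_div_cancel_right₀ _ hL.ne']
    ring
  · change 1 - T.gen (T.mul x y) / T.gen 0 =
      max 0 (1 - T.gen x / T.gen 0 + (1 - T.gen y / T.gen 0) - 1)
    rw [gen_mul_eq_min hT h0, ← min_div_div_right hL.le, div_self hL.ne', sub_inf, sub_self,
      add_div]
    congr 1
    ring

end ContinuousTNorm

/-- Classification of continuous t-norms whose only idempotents are `0` and `1`:
with no nilpotent elements, `⊗` is order-isomorphic to multiplication; with a nilpotent
element, every `x` with `0 < x < 1` is nilpotent and `⊗` is order-isomorphic to the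
Łukasiewicz tensor. -/
theorem tnorm_classification_of_idempotents_eq_bot_top (T : ContinuousTNorm)
    (hidem : ∀ x : I, T.mul x x = x → x = 0 ∨ x = 1) :
    ((∀ x : I, x ≠ 0 → ∀ n : ℕ, T.pow x n ≠ 0) →
      ∃ φ : I → I, StrictMono φ ∧ Function.Bijective φ ∧
        ∀ x y : I, (φ (T.mul x y) : ℝ) = (φ x : ℝ) * (φ y : ℝ)) ∧
    ((∃ x : I, x ≠ 0 ∧ ∃ n : ℕ, T.pow x n = 0) →
      (∀ x : I, 0 < x → x < 1 → ∃ n : ℕ, T.pow x n = 0) ∧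
      ∃ φ : I → I, StrictMono φ ∧ Function.Bijective φ ∧
        ∀ x y : I, (φ (T.mul x y) : ℝ) = max 0 ((φ x : ℝ) + (φ y : ℝ) - 1)) :=
  ⟨T.exists_strictMono_map_mul_eq_mul hidem, fun hnil =>
    ⟨fun _ _ hx1 => T.exists_pow_eq_zero_of_lt_one hidem hnil hx1,
      T.exists_strictMono_map_mul_eq_lukasiewicz hidem hnil⟩⟩
end

section
/- Let X be a partially ordered compact space and let A, B ⊆ X be subsets such that A is a closed upper set, B is a closed lower set, and A ∩ B = ∅. Then there exists a continuous monotone function ψ : X → [0,1] such that ψ(x) = 1 for every x ∈ A and ψ(x) = 0 for every x ∈ B. -/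
/-!
Run Urysohn's construction with every open set `U` of the dyadic refinement chosen to be a lower
set: then each step function `indicator Uᶜ 1` is monotone, hence so is the limit. Such a refinement
exists because, in a compact space with closed order, a closed upper set and a disjoint closed lower
set have disjoint open upper and lower neighbourhoods: the tube lemma separates them by open sets
`U₁ × V₁` avoiding the graph of `≤`, and removing from `U₁` the lower closure of `U₁ᶜ` (and from
`V₁` the upper closure of `V₁ᶜ`) makes them upper (lower) while keeping them open, because upper and
lower closures of closed sets are closed by compactness.
-/

open unitInterval Set

section CompactOrderClosed

variable {X : Type*} [TopologicalSpace X] [Preorder X] [OrderClosedTopology X] [CompactSpace X]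

theorem IsClosed.upperClosure_of_compactSpace {s : Set X} (hs : IsClosed s) :
    IsClosed (upperClosure s : Set X) := by
  have h : (upperClosure s : Set X) = Prod.snd '' ({p : X × X | p.1 ≤ p.2} ∩ s ×ˢ univ) := by
    ext x
    simp [mem_upperClosure, and_comm]
  exact h ▸ isClosedMap_snd_of_compactSpace _ (isClosed_le_prod.inter (hs.prod isClosed_univ))

theorem IsClosed.lowerClosure_of_compactSpace {s : Set X} (hs : IsClosed s) :
    IsClosed (lowerClosure s : Set X) := by
  have h : (lowerClosure s : Set X) = Prod.fst '' ({p : X × X | p.1 ≤ p.2} ∩ univ ×ˢ s) := by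
    ext x
    simp [mem_lowerClosure, and_comm]
  exact h ▸ isClosedMap_fst_of_compactSpace _ (isClosed_le_prod.inter (isClosed_univ.prod hs))

theorem exists_isOpen_isUpperSet_isLowerSet_disjoint {s t : Set X} (hs : IsClosed s)
    (hsu : IsUpperSet s) (ht : IsClosed t) (htl : IsLowerSet t) (hst : Disjoint s t) :
    ∃ u v : Set X, IsOpen u ∧ IsUpperSet u ∧ IsOpen v ∧ IsLowerSet v ∧ s ⊆ u ∧ t ⊆ v ∧
      Disjoint u v := by
  have hst_le : s ×ˢ t ⊆ {p : X × X | p.1 ≤ p.2}ᶜ := by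
    rintro ⟨a, b⟩ ⟨ha, hb⟩ hab
    exact hst.notMem_of_mem_left (hsu hab ha) hb
  obtain ⟨U₁, V₁, hU₁, hV₁, hsU₁, htV₁, hU₁V₁⟩ :=
    generalized_tube_lemma hs.isCompact ht.isCompact isClosed_le_prod.isOpen_compl hst_le
  refine ⟨(lowerClosure U₁ᶜ : Set X)ᶜ, (upperClosure V₁ᶜ : Set X)ᶜ,
    hU₁.isClosed_compl.lowerClosure_of_compactSpace.isOpen_compl, (lowerClosure U₁ᶜ).lower.compl,
    hV₁.isClosed_compl.upperClosure_of_compactSpace.isOpen_compl, (upperClosure V₁ᶜ).upper.compl,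
    ?_, ?_, ?_⟩
  · rintro x hx ⟨y, hy, hxy⟩
    exact hy (hsU₁ (hsu hxy hx))
  · rintro x hx ⟨y, hy, hyx⟩
    exact hy (htV₁ (htl hyx hx))
  · refine disjoint_left.2 fun x hxu hxv => hU₁V₁ (mk_mem_prod ?_ ?_) (le_refl x)
    · exact not_not.1 fun hx => hxu (subset_lowerClosure hx)
    · exact not_not.1 fun hx => hxv (subset_upperClosure hx)

theorem exists_isOpen_isLowerSet_closure_subset {c u : Set X} (hc : IsClosed c) (hu : IsOpen u)
    (hul : IsLowerSet u) (hcu : c ⊆ u) :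
    ∃ v : Set X, IsOpen v ∧ IsLowerSet v ∧ c ⊆ v ∧ closure v ⊆ u := by
  obtain ⟨w, v, hw, -, hv, hvl, huw, hcv, hwv⟩ :=
    exists_isOpen_isUpperSet_isLowerSet_disjoint hu.isClosed_compl hul.compl
      hc.lowerClosure_of_compactSpace (lowerClosure c).lower
      (disjoint_compl_left_iff_subset.2 (lowerClosure_min hcu hul))
  have hvw : closure v ⊆ wᶜ :=
    closure_minimal hwv.subset_compl_left hw.isClosed_compl
  exact ⟨v, hv, hvl, subset_lowerClosure.trans hcv, hvw.trans (compl_subset_comm.1 huw)⟩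

end CompactOrderClosed

namespace Urysohns.CU

variable {X : Type*} [TopologicalSpace X] [Preorder X]

theorem monotone_approx (c : CU fun _ U : Set X => IsLowerSet U) (n : ℕ) :
    Monotone (c.approx n) := by
  induction n generalizing c with
  | zero =>
    intro x y hxy
    by_cases hy : y ∈ c.U
    · have hx : x ∉ c.Uᶜ := not_not.2 (c.P_C_U hxy hy)
      exact (indicator_of_notMem hx _).trans_le (c.approx_nonneg 0 y)
    · exact (c.approx_le_one 0 x).trans (c.approx_of_notMem_U 0 hy).ge
  | succ n ih => exact fun x y hxy => midpoint_le_midpoint (ih c.left hxy) (ih c.right hxy)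

theorem monotone_lim (c : CU fun _ U : Set X => IsLowerSet U) : Monotone c.lim :=
  fun _ _ hxy => ciSup_mono (c.bddAbove_range_approx _) fun n => c.monotone_approx n hxy

end Urysohns.CU

theorem posComp_urysohn_general {X : Type*} [TopologicalSpace X] [CompactSpace X] [PartialOrder X]
    (hle : IsClosed {p : X × X | p.1 ≤ p.2})
    (A B : Set X) (hA : IsClosed A) (hAu : IsUpperSet A)
    (hB : IsClosed B) (hAB : A ∩ B = ∅) :
    ∃ ψ : X → I, Continuous ψ ∧ Monotone ψ ∧ (∀ x ∈ A, ψ x = 1) ∧ (∀ x ∈ B, ψ x = 0) := by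
  have : OrderClosedTopology X := ⟨hle⟩
  let c : Urysohns.CU fun _ U : Set X => IsLowerSet U :=
    { C := B
      U := Aᶜ
      P_C_U := hAu.compl
      closed_C := hB
      open_U := hA.isOpen_compl
      subset := (disjoint_iff_inter_eq_empty.2 hAB).symm.subset_compl_right
      hP := fun hc hul hu hcu => by
        obtain ⟨v, hv, hvl, hcv, hvu⟩ := exists_isOpen_isLowerSet_closure_subset hc hu hul hcu
        exact ⟨v, hv, hcv, hvu, hvl, hul⟩ }
  refine ⟨fun x => ⟨c.lim x, c.lim_mem_Icc x⟩, c.continuous_lim.subtype_mk _,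
    c.monotone_lim, fun x hx => Subtype.ext (c.lim_of_notMem_U x (· hx)),
    fun x hx => Subtype.ext (c.lim_of_mem_C x hx)⟩

/-- Nachbin separation: in a partially ordered compact space, a closed upper set and a
disjoint closed lower set can be separated by a continuous monotone map into `[0,1]`. -/
theorem posComp_urysohn {X : Type*} [TopologicalSpace X] [CompactSpace X] [PartialOrder X]
    (hle : IsClosed {p : X × X | p.1 ≤ p.2})
    (A B : Set X) (hA : IsClosed A) (hAu : IsUpperSet A)
    (hB : IsClosed B) (hBl : IsLowerSet B) (hAB : A ∩ B = ∅) :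
    ∃ ψ : X → I, Continuous ψ ∧ Monotone ψ ∧ (∀ x ∈ A, ψ x = 1) ∧ (∀ x ∈ B, ψ x = 0) :=
  posComp_urysohn_general hle A B hA hAu hB hAB
end
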